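/- arXiv:2506.10538 — 7 statements merged into one kernel-verified Lean document; each statement's English description precedes it below -/
import Mathlib

section
/- Pointwise maximum principle at a strict one-sided maximum (Proposition 2.4, subharmonic branch). Let q ≥ 0 and c ∈ ℝ. Let f : ℝ → ℝ be Borel measurable, differentiable on a neighborhood of c with f′ differentiable at c, and suppose that y ↦ f(c+y) − f(c) is Π-integrable on (−∞,0). If f(c) ≥ 0, f′(c) = 0, and f(c) > f(x) for every x < c, then ℒf(c) − q·f(c) < 0. -/
open MeasureTheory Set Filter Topology

/-- Generator of a spectrally negative Lévy process with drift `δ`,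
Gaussian coefficient `σ` and Lévy measure `ν` concentrated on `(-∞,0)`:
`ℒf(x) = δ f'(x) + (σ²/2) f''(x) + ∫_{(-∞,0)} (f(x+y) - f(x)) ν(dy)`. -/
noncomputable def gen (δ σ : ℝ) (ν : Measure ℝ) (f : ℝ → ℝ) (x : ℝ) : ℝ :=
  δ * deriv f x + σ ^ 2 / 2 * deriv (deriv f) x +
    ∫ y in Iio (0 : ℝ), (f (x + y) - f x) ∂ν

/-! At a strict maximum from the left with `f' c = 0`, the second-derivative test forbids
`f'' c > 0`, so the diffusion term is `≤ 0`; the jump term integrates the strictly negative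
`f (c + y) - f c` against a nonzero measure carried by `(-∞, 0)`, so it is `< 0`; and
`q f c ≥ 0`. -/

theorem deriv_deriv_nonpos_of_eventually_lt_left {f : ℝ → ℝ} {c : ℝ} (hc : ContinuousAt f c)
    (hd : deriv f c = 0) (hlt : ∀ᶠ x in 𝓝[<] c, f x < f c) : deriv (deriv f) c ≤ 0 := by
  by_contra! hpos
  have hmin : ∀ᶠ x in 𝓝[<] c, f c ≤ f x :=
    nhdsWithin_le_nhds (isLocalMin_of_deriv_deriv_pos hpos hd hc)
  obtain ⟨x, hle, hlt⟩ := (hmin.and hlt).exists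
  exact hle.not_gt hlt

theorem integral_neg_of_ae_neg {α : Type*} [MeasurableSpace α] {μ : Measure α} {g : α → ℝ}
    (hμ : μ ≠ 0) (hg : Integrable g μ) (hneg : ∀ᵐ x ∂μ, g x < 0) : ∫ x, g x ∂μ < 0 := by
  have hpos : 0 < ∫ x, (-g) x ∂μ := by
    rw [integral_pos_iff_support_of_nonneg_ae (hneg.mono fun x hx => by simp [hx.le]) hg.neg]
    refine (Measure.measure_univ_pos.mpr hμ).trans_le (measure_mono_ae ?_)
    filter_upwards [hneg] with x hx _
    exact Function.mem_support.mpr (neg_ne_zero.mpr hx.ne)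
  rw [integral_neg'] at hpos
  linarith

theorem stmt0_general
    (δ σ : ℝ)
    (ν : Measure ℝ) (hν0 : ν ≠ 0) (hνsupp : ν (Ici (0 : ℝ)) = 0)
    (q : ℝ) (hq : 0 ≤ q) (c : ℝ) (f : ℝ → ℝ)
    (hdiff : ∀ᶠ x in 𝓝 c, DifferentiableAt ℝ f x)
    (hint : IntegrableOn (fun y => f (c + y) - f c) (Iio (0 : ℝ)) ν)
    (h0 : 0 ≤ f c) (h1 : deriv f c = 0) (h2 : ∀ x < c, f x < f c) :
    gen δ σ ν f c - q * f c < 0 := by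
  have hrestrict : ν.restrict (Iio 0) = ν := by
    refine Measure.restrict_eq_self_of_ae_mem (ae_iff.mpr ?_)
    simp only [mem_Iio, not_lt]
    exact hνsupp
  have hdiffusion : σ ^ 2 / 2 * deriv (deriv f) c ≤ 0 :=
    mul_nonpos_of_nonneg_of_nonpos (by positivity) <|
      deriv_deriv_nonpos_of_eventually_lt_left hdiff.self_of_nhds.continuousAt h1
        (eventually_nhdsWithin_of_forall h2)
  have hjump : ∫ y in Iio (0 : ℝ), (f (c + y) - f c) ∂ν < 0 :=
    integral_neg_of_ae_neg (by rwa [hrestrict]) hint <|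
      ae_restrict_of_forall_mem measurableSet_Iio fun y (hy : y < 0) =>
        sub_neg.mpr (h2 _ (by linarith))
  have hkilling : 0 ≤ q * f c := mul_nonneg hq h0
  rw [gen, h1, mul_zero, zero_add]
  linarith

/-- Pointwise maximum principle at a strict one-sided maximum
(Proposition 2.4, subharmonic branch). -/
theorem stmt0
    (δ σ : ℝ) (hσ : 0 ≤ σ)
    (ν : Measure ℝ) (hν0 : ν ≠ 0) (hνsupp : ν (Ici (0 : ℝ)) = 0)
    (hνint : IntegrableOn (fun y => min 1 |y|) (Iio (0 : ℝ)) ν)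
    (q : ℝ) (hq : 0 ≤ q) (c : ℝ) (f : ℝ → ℝ)
    (hmeas : Measurable f)
    (hdiff : ∀ᶠ x in 𝓝 c, DifferentiableAt ℝ f x)
    (hdiff' : DifferentiableAt ℝ (deriv f) c)
    (hint : IntegrableOn (fun y => f (c + y) - f c) (Iio (0 : ℝ)) ν)
    (h0 : 0 ≤ f c) (h1 : deriv f c = 0) (h2 : ∀ x < c, f x < f c) :
    gen δ σ ν f c - q * f c < 0 :=
  stmt0_general δ σ ν hν0 hνsupp q hq c f hdiff hint h0 h1 h2
end

section
/- Pointwise minimum principle at a strict one-sided minimum (Proposition 2.4, superharmonic branch). Let q ≥ 0 and c ∈ ℝ. Let f : ℝ → ℝ be Borel measurable, differentiable on a neighborhood of c with f′ differentiable at c, and suppose that y ↦ f(c+y) − f(c) is Π-integrable on (−∞,0). If f(c) ≤ 0, f′(c) = 0, and f(c) < f(x) for every x < c, then ℒf(c) − q·f(c) > 0. -/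
open MeasureTheory Set Filter Topology

/-
The jump part `∫_{(-∞,0)} (f(c+y) - f(c)) ν(dy)` is strictly positive, because the integrand is
positive on `(-∞,0)` and `ν` is a nonzero measure carried by `(-∞,0)`.  The drift term vanishes
since `f'(c) = 0`, the diffusion term is nonnegative by the second derivative test
(`f''(c) < 0` would make `c` a local maximum, which the strict minimum from the left forbids),
and `-q f(c) ≥ 0`.
-/

theorem MeasureTheory.Measure.measure_pos_of_measure_compl_eq_zero {α : Type*}
    [MeasurableSpace α] {μ : Measure α} {s : Set α} (hμ : μ ≠ 0) (hs : μ sᶜ = 0) : 0 < μ s := by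
  rw [measure_of_measure_compl_eq_zero hs]
  exact Measure.measure_univ_pos.mpr hμ

theorem MeasureTheory.setIntegral_pos_of_pos_on {α : Type*} [MeasurableSpace α] {μ : Measure α}
    {s : Set α} {g : α → ℝ} (hs : MeasurableSet s) (hg : IntegrableOn g s μ)
    (hpos : ∀ x ∈ s, 0 < g x) (hμs : 0 < μ s) : 0 < ∫ x in s, g x ∂μ := by
  have hnonneg : 0 ≤ᵐ[μ.restrict s] g :=
    (ae_restrict_iff' hs).mpr (ae_of_all _ fun x hx => (hpos x hx).le)
  rwa [setIntegral_pos_iff_support_of_nonneg_ae hnonneg hg,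
    inter_eq_right.mpr fun x hx => Function.mem_support.mpr (hpos x hx).ne']

theorem deriv_deriv_nonneg_of_not_isLocalMax {f : ℝ → ℝ} {c : ℝ} (hc : ContinuousAt f c)
    (hd : deriv f c = 0) (hmax : ¬IsLocalMax f c) : 0 ≤ deriv (deriv f) c :=
  not_lt.mp fun hneg => hmax (isLocalMax_of_deriv_deriv_neg hneg hd hc)

theorem not_isLocalMax_of_forall_lt_left {f : ℝ → ℝ} {c : ℝ} (h : ∀ x < c, f c < f x) :
    ¬IsLocalMax f c := by
  intro hmax
  have hle : ∀ᶠ x in 𝓝[<] c, f x ≤ f c := nhdsWithin_le_nhds hmax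
  obtain ⟨x, hxle, hxlt⟩ := (hle.and (eventually_nhdsWithin_of_forall h)).exists
  exact hxle.not_gt hxlt

theorem stmt1_general
    (δ σ : ℝ)
    (ν : Measure ℝ) (hν0 : ν ≠ 0) (hνsupp : ν (Ici (0 : ℝ)) = 0)
    (q : ℝ) (hq : 0 ≤ q) (c : ℝ) (f : ℝ → ℝ)
    (hdiff : ∀ᶠ x in 𝓝 c, DifferentiableAt ℝ f x)
    (hint : IntegrableOn (fun y => f (c + y) - f c) (Iio (0 : ℝ)) ν)
    (h0 : f c ≤ 0) (h1 : deriv f c = 0) (h2 : ∀ x < c, f c < f x) :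
    0 < gen δ σ ν f c - q * f c := by
  have hjump : 0 < ∫ y in Iio (0 : ℝ), (f (c + y) - f c) ∂ν :=
    setIntegral_pos_of_pos_on measurableSet_Iio hint
      (fun y hy => sub_pos.mpr (h2 _ (add_lt_of_neg_right c hy)))
      (Measure.measure_pos_of_measure_compl_eq_zero hν0 (by rwa [compl_Iio]))
  have hdiffusion : 0 ≤ σ ^ 2 / 2 * deriv (deriv f) c :=
    mul_nonneg (by positivity) <| deriv_deriv_nonneg_of_not_isLocalMax
      hdiff.self_of_nhds.continuousAt h1 (not_isLocalMax_of_forall_lt_left h2)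
  rw [gen, h1, mul_zero, zero_add]
  linarith [mul_nonneg hq (neg_nonneg.mpr h0)]

/-- Pointwise minimum principle at a strict one-sided minimum
(Proposition 2.4, superharmonic branch). -/
theorem stmt1
    (δ σ : ℝ) (hσ : 0 ≤ σ)
    (ν : Measure ℝ) (hν0 : ν ≠ 0) (hνsupp : ν (Ici (0 : ℝ)) = 0)
    (hνint : IntegrableOn (fun y => min 1 |y|) (Iio (0 : ℝ)) ν)
    (q : ℝ) (hq : 0 ≤ q) (c : ℝ) (f : ℝ → ℝ)
    (hmeas : Measurable f)
    (hdiff : ∀ᶠ x in 𝓝 c, DifferentiableAt ℝ f x)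
    (hdiff' : DifferentiableAt ℝ (deriv f) c)
    (hint : IntegrableOn (fun y => f (c + y) - f c) (Iio (0 : ℝ)) ν)
    (h0 : f c ≤ 0) (h1 : deriv f c = 0) (h2 : ∀ x < c, f c < f x) :
    0 < gen δ σ ν f c - q * f c :=
  stmt1_general δ σ ν hν0 hνsupp q hq c f hdiff hint h0 h1 h2
end

section
/- Maximum principle for q-subharmonic functions (Proposition 2.5, case q > 0). Let q > 0 and a < b. Let f : ℝ → ℝ be nonnegative, Borel measurable, continuous on (−∞,b], differentiable on a neighborhood of every point of (a,b) with f′ differentiable at every point of (a,b), and with y ↦ f(x+y) − f(x) Π-integrable for every x ∈ (a,b). Assume ℒf(x) − q·f(x) ≥ 0 for all x ∈ (a,b). If there exists c ∈ (a,b) such that f(c) ≥ f(x) for all x ∈ (−∞,b), then f vanishes identically on (−∞,b]. In particular, a non-constant nonnegative function that is q-subharmonic on (a,b) in this sense cannot attain the maximum of its restriction to (−∞,b) at any point of (a,b). -/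
open MeasureTheory Set Filter Topology

/-!
At an interior maximum point `c` of `f` on `(-∞,b)` every term of the generator is nonpositive:
`f'(c) = 0`, `f''(c) ≤ 0` and `f(c+y) - f(c) ≤ 0` for `y < 0` (the jumps are downward). Hence
`q f(c) ≤ ℒf(c) ≤ 0`, so the maximum `f(c)` of the nonnegative function `f` is `0`, and continuity
carries `f = 0` from `(-∞,b)` to `b`.
-/

/-- Were `f''(c) > 0`, the second derivative test would make `c` also a local minimum, so `f` would
be locally constant and `f''(c) = 0`. -/
theorem IsLocalMax.deriv_deriv_nonpos {f : ℝ → ℝ} {c : ℝ} (hmax : IsLocalMax f c)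
    (hcont : ContinuousAt f c) : deriv (deriv f) c ≤ 0 := by
  by_contra! hpos
  have hmin : IsLocalMin f c := isLocalMin_of_deriv_deriv_pos hpos hmax.deriv_eq_zero hcont
  have hconst : f =ᶠ[𝓝 c] fun _ => f c := by
    filter_upwards [hmax, hmin] with x hle hge using le_antisymm hle hge
  have hderiv : deriv f =ᶠ[𝓝 c] fun _ => 0 :=
    hconst.eventuallyEq_nhds.mono fun x hx => hx.deriv_eq.trans (deriv_const x (f c))
  exact hpos.ne' (hderiv.deriv_eq.trans (deriv_const c 0))

theorem gen_nonpos_of_isLocalMax {δ σ : ℝ} {ν : Measure ℝ} {f : ℝ → ℝ} {c : ℝ}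
    (hmax : IsLocalMax f c) (hleft : ∀ x < c, f x ≤ f c) (hcont : ContinuousAt f c) :
    gen δ σ ν f c ≤ 0 := by
  have hjump : ∫ y in Iio (0 : ℝ), (f (c + y) - f c) ∂ν ≤ 0 :=
    setIntegral_nonpos measurableSet_Iio fun y (hy : y < 0) =>
      sub_nonpos.2 (hleft _ (by linarith))
  have hdiffusion : σ ^ 2 / 2 * deriv (deriv f) c ≤ 0 :=
    mul_nonpos_of_nonneg_of_nonpos (by positivity) (hmax.deriv_deriv_nonpos hcont)
  rw [gen, hmax.deriv_eq_zero, mul_zero, zero_add]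
  linarith

theorem stmt2_general
    (δ σ : ℝ)
    (ν : Measure ℝ)
    (q : ℝ) (hq : 0 < q) (a b : ℝ) (f : ℝ → ℝ)
    (hnn : ∀ x, 0 ≤ f x)
    (hcont : ContinuousOn f (Iic b))
    (hsub : ∀ x ∈ Ioo a b, 0 ≤ gen δ σ ν f x - q * f x)
    (hmax : ∃ c ∈ Ioo a b, ∀ x ∈ Iio b, f x ≤ f c) :
    ∀ x ∈ Iic b, f x = 0 := by
  obtain ⟨c, hc, hcmax⟩ := hmax
  have hloc : IsLocalMax f c := mem_of_superset (Iio_mem_nhds hc.2) hcmax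
  have hcontc : ContinuousAt f c := hcont.continuousAt (Iic_mem_nhds hc.2)
  have hgen : gen δ σ ν f c ≤ 0 :=
    gen_nonpos_of_isLocalMax hloc (fun x hx => hcmax x (hx.trans hc.2)) hcontc
  have hfc : f c = 0 :=
    le_antisymm (nonpos_of_mul_nonpos_right (by linarith [hsub c hc]) hq) (hnn c)
  have hzero : EqOn f 0 (Iio b) := fun x hx => le_antisymm (hfc ▸ hcmax x hx : f x ≤ 0) (hnn x)
  exact hzero.of_subset_closure hcont continuousOn_const Iio_subset_Iic_self
    (closure_Iio b).ge

/-- Maximum principle for `q`-subharmonic functions (Proposition 2.5, case `q > 0`):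
a nonnegative function that is `q`-subharmonic on `(a,b)`, continuous on `(-∞,b]`,
and attains at some interior point of `(a,b)` the maximum of its restriction to
`(-∞,b)`, must vanish identically on `(-∞,b]`. -/
theorem stmt2
    (δ σ : ℝ) (hσ : 0 ≤ σ)
    (ν : Measure ℝ) (hν0 : ν ≠ 0) (hνsupp : ν (Ici (0 : ℝ)) = 0)
    (hνint : IntegrableOn (fun y => min 1 |y|) (Iio (0 : ℝ)) ν)
    (q : ℝ) (hq : 0 < q) (a b : ℝ) (hab : a < b) (f : ℝ → ℝ)
    (hnn : ∀ x, 0 ≤ f x)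
    (hmeas : Measurable f)
    (hcont : ContinuousOn f (Iic b))
    (hdiff : ∀ x ∈ Ioo a b, ∀ᶠ z in 𝓝 x, DifferentiableAt ℝ f z)
    (hdiff' : ∀ x ∈ Ioo a b, DifferentiableAt ℝ (deriv f) x)
    (hint : ∀ x ∈ Ioo a b, IntegrableOn (fun y => f (x + y) - f x) (Iio (0 : ℝ)) ν)
    (hsub : ∀ x ∈ Ioo a b, 0 ≤ gen δ σ ν f x - q * f x)
    (hmax : ∃ c ∈ Ioo a b, ∀ x ∈ Iio b, f x ≤ f c) :
    ∀ x ∈ Iic b, f x = 0 :=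
  stmt2_general δ σ ν q hq a b f hnn hcont hsub hmax
end

section
/- Lemma 5.2 of the paper (strict domination of the smooth Gerber–Shiu continuation, bounded variation case). Assume σ = 0 and δ > 0. Let a < b and let g, h : ℝ → ℝ be continuous with h(x) = g(x) for all x ≤ a. Assume: g and h are differentiable on (a,b); f := h − g is continuously differentiable on (a,b) with f′ bounded on (a,(a+b)/2) and with lim_{x↓a} f′(x) existing; for every x ∈ [a,b) the maps y ↦ g(x+y) − g(x) and y ↦ h(x+y) − h(x) are Π-integrable on (−∞,0); ℒh(x) = 0 for all x ∈ (a,b); and x ↦ ℒg(x) is continuous on [a,b) with ℒg(x) < 0 for all x ∈ [a,b). Then f = h − g is strictly increasing on (a,b); in particular h(x) > g(x) for all x ∈ (a,b). -/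
open MeasureTheory Set Filter Topology

lemma gen_zero (δ : ℝ) (ν : Measure ℝ) (f : ℝ → ℝ) (x : ℝ) :
    gen δ 0 ν f x = δ * deriv f x + ∫ y in Iio 0, (f (x + y) - f x) ∂ν := by
  simp [gen]

lemma gen_zero_sub {δ : ℝ} {ν : Measure ℝ} {g h : ℝ → ℝ} {x : ℝ}
    (hg : DifferentiableAt ℝ g x) (hh : DifferentiableAt ℝ h x)
    (hgi : IntegrableOn (fun y => g (x + y) - g x) (Iio 0) ν)
    (hhi : IntegrableOn (fun y => h (x + y) - h x) (Iio 0) ν) :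
    gen δ 0 ν (fun z => h z - g z) x = gen δ 0 ν h x - gen δ 0 ν g x := by
  have hint : ∫ y in Iio 0, (h (x + y) - g (x + y) - (h x - g x)) ∂ν =
      (∫ y in Iio 0, (h (x + y) - h x) ∂ν) - ∫ y in Iio 0, (g (x + y) - g x) ∂ν := by
    rw [← integral_sub hhi hgi]
    simp only [sub_sub_sub_comm]
  rw [gen_zero, gen_zero, gen_zero, deriv_fun_sub hh hg, hint]
  ring

lemma apply_max_of_forall_le_eq_zero {f : ℝ → ℝ} {a : ℝ} (hf0 : ∀ x ≤ a, f x = 0) (x : ℝ) :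
    f (max x a) = f x := by
  rcases le_total x a with hxa | hax
  · rw [max_eq_right hxa, hf0 a le_rfl, hf0 x hxa]
  · rw [max_eq_left hax]

lemma abs_sub_le_of_abs_deriv_le {f : ℝ → ℝ} {a m M : ℝ} (hfc : ContinuousOn f (Icc a m))
    (hfd : ∀ x ∈ Ioo a m, DifferentiableAt ℝ f x) (hM : ∀ x ∈ Ioo a m, |deriv f x| ≤ M)
    {u v : ℝ} (hau : a ≤ u) (huv : u ≤ v) (hvm : v ≤ m) : |f v - f u| ≤ M * (v - u) := by
  rcases huv.eq_or_lt with rfl | huv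
  · simp
  have hsub : Ioo u v ⊆ Ioo a m := Ioo_subset_Ioo hau hvm
  obtain ⟨ξ, hξ, hslope⟩ := exists_deriv_eq_slope f huv (hfc.mono (Icc_subset_Icc hau hvm))
    fun x hx => (hfd x (hsub hx)).differentiableWithinAt
  rw [eq_div_iff (sub_pos.mpr huv).ne'] at hslope
  rw [← hslope, abs_mul, abs_of_pos (sub_pos.mpr huv)]
  exact mul_le_mul_of_nonneg_right (hM ξ (hsub hξ)) (sub_pos.mpr huv).le

lemma tendsto_setIntegral_sub_nhdsGT {ν : Measure ℝ} {f : ℝ → ℝ} {a m M : ℝ}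
    (hν : IntegrableOn (fun y => min 1 |y|) (Iio 0) ν) (hfc : Continuous f)
    (hf0 : ∀ x ≤ a, f x = 0) (ham : a < m)
    (hlip : ∀ u v, a ≤ u → u ≤ v → v ≤ m → |f v - f u| ≤ M * (v - u)) :
    Tendsto (fun x => ∫ y in Iio 0, (f (x + y) - f x) ∂ν) (𝓝[>] a) (𝓝 0) := by
  have hM : 0 ≤ M := by
    have := (abs_nonneg _).trans (hlip a m le_rfl ham.le le_rfl)
    exact nonneg_of_mul_nonneg_left this (sub_pos.mpr ham)
  have hbound : ∀ᶠ x in 𝓝[>] a, ∀ᵐ y ∂ν.restrict (Iio 0),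
      ‖f (x + y) - f x‖ ≤ M * min 1 |y| := by
    filter_upwards [Ioo_mem_nhdsGT (lt_min (lt_add_one a) ham)] with x hx
    refine (ae_restrict_iff' measurableSet_Iio).mpr (ae_of_all _ fun y (hy : y < 0) => ?_)
    have hxm : x ≤ m := hx.2.le.trans (min_le_right _ _)
    have hx1 : x < a + 1 := hx.2.trans_le (min_le_left _ _)
    -- replacing `x + y` by `max (x + y) a` keeps the value of `f` and moves the point into `[a, m]`
    rw [Real.norm_eq_abs, abs_sub_comm, ← apply_max_of_forall_le_eq_zero hf0 (x + y)]
    refine (hlip _ x (le_max_right _ _) (max_le (by linarith) hx.1.le) hxm).trans ?_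
    refine mul_le_mul_of_nonneg_left (le_min ?_ ?_) hM
    · linarith [le_max_right (x + y) a]
    · linarith [le_max_left (x + y) a, abs_of_neg hy]
  have hlim : ∀ᵐ y ∂ν.restrict (Iio 0), Tendsto (fun x => f (x + y) - f x) (𝓝[>] a) (𝓝 0) := by
    refine (ae_restrict_iff' measurableSet_Iio).mpr (ae_of_all _ fun y (hy : y < 0) => ?_)
    have : Tendsto (fun x => f (x + y) - f x) (𝓝 a) (𝓝 (f (a + y) - f a)) :=
      ((hfc.comp (continuous_add_const y)).sub hfc).tendsto a
    rw [hf0 (a + y) (by linarith), hf0 a le_rfl, sub_zero] at this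
    exact this.mono_left nhdsWithin_le_nhds
  simpa using tendsto_integral_filter_of_dominated_convergence _
    (Eventually.of_forall fun x =>
      ((hfc.comp (continuous_const_add x)).sub continuous_const).aestronglyMeasurable)
    hbound (hν.const_mul M) hlim

lemma setIntegral_sub_nonpos_of_monotoneOn {ν : Measure ℝ} {f : ℝ → ℝ} {a c : ℝ} (hac : a ≤ c)
    (hf0 : ∀ x ≤ a, f x = 0) (hmono : MonotoneOn f (Icc a c)) :
    ∫ y in Iio 0, (f (c + y) - f c) ∂ν ≤ 0 := by
  refine setIntegral_nonpos measurableSet_Iio fun y (hy : y < 0) => sub_nonpos.mpr ?_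
  rw [← apply_max_of_forall_le_eq_zero hf0]
  exact hmono ⟨le_max_right _ _, max_le (by linarith) hac⟩ ⟨hac, le_rfl⟩
    (max_le (by linarith) hac)

lemma forall_pos_on_Ioo_of_propagation {φ : ℝ → ℝ} {a b : ℝ}
    (hφ : ContinuousOn φ (Ioo a b)) (hnear : ∀ᶠ x in 𝓝[>] a, 0 < φ x)
    (hstep : ∀ c ∈ Ioo a b, (∀ x ∈ Ioo a c, 0 < φ x) → 0 < φ c) :
    ∀ x ∈ Ioo a b, 0 < φ x := by
  by_contra! hneg
  obtain ⟨x₀, hx₀, hφx₀⟩ := hneg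
  set S := {x ∈ Ioo a b | φ x ≤ 0}
  have hSne : S.Nonempty := ⟨x₀, hx₀, hφx₀⟩
  have hSbdd : BddBelow S := ⟨a, fun x hx => hx.1.1.le⟩
  obtain ⟨u, hau, hu⟩ := mem_nhdsGT_iff_exists_Ioc_subset.mp hnear
  have huc : u ≤ sInf S := le_csInf hSne fun x hx => by
    by_contra! hxu
    exact (hu ⟨hx.1.1, hxu.le⟩).not_ge hx.2
  have hc : sInf S ∈ Ioo a b := ⟨hau.trans_le huc, (csInf_le hSbdd ⟨hx₀, hφx₀⟩).trans_lt hx₀.2⟩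
  have hbefore : ∀ x ∈ Ioo a (sInf S), 0 < φ x := fun x hx => by
    by_contra! hφx
    exact (csInf_le hSbdd ⟨⟨hx.1, hx.2.trans hc.2⟩, hφx⟩).not_gt hx.2
  have hφc : φ (sInf S) ≤ 0 := by
    have : (𝓝[S] sInf S).NeBot :=
      mem_closure_iff_nhdsWithin_neBot.mp (csInf_mem_closure hSne hSbdd)
    exact le_of_tendsto ((hφ.continuousAt (Ioo_mem_nhds hc.1 hc.2)).tendsto.mono_left
      nhdsWithin_le_nhds) (eventually_nhdsWithin_of_forall fun x (hx : x ∈ S) => hx.2)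
  exact (hstep _ hc hbefore).not_ge hφc

lemma tendsto_gen_zero_nhdsGT {δ : ℝ} {ν : Measure ℝ} {f : ℝ → ℝ} {a m M L : ℝ}
    (hν : IntegrableOn (fun y => min 1 |y|) (Iio 0) ν) (hfc : Continuous f)
    (hf0 : ∀ x ≤ a, f x = 0) (ham : a < m) (hfd : ∀ x ∈ Ioo a m, DifferentiableAt ℝ f x)
    (hM : ∀ x ∈ Ioo a m, |deriv f x| ≤ M) (hL : Tendsto (deriv f) (𝓝[>] a) (𝓝 L)) :
    Tendsto (fun x => gen δ 0 ν f x) (𝓝[>] a) (𝓝 (δ * L)) := by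
  have hjump := tendsto_setIntegral_sub_nhdsGT hν hfc hf0 ham fun u v hau huv hvm =>
    abs_sub_le_of_abs_deriv_le hfc.continuousOn hfd hM hau huv hvm
  simpa only [gen_zero, add_zero] using (hL.const_mul δ).add hjump

lemma deriv_pos_of_gen_zero_pos {δ : ℝ} {ν : Measure ℝ} {f : ℝ → ℝ} {a c : ℝ} (hδ : 0 < δ)
    (hfc : ContinuousOn f (Icc a c)) (hf0 : ∀ x ≤ a, f x = 0) (hac : a ≤ c)
    (hbefore : ∀ x ∈ Ioo a c, 0 < deriv f x) (hgen : 0 < gen δ 0 ν f c) : 0 < deriv f c := by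
  have hmono : StrictMonoOn f (Icc a c) :=
    strictMonoOn_of_deriv_pos (convex_Icc a c) hfc (by rwa [interior_Icc])
  have hjump := setIntegral_sub_nonpos_of_monotoneOn (ν := ν) hac hf0 hmono.monotoneOn
  rw [gen_zero] at hgen
  exact pos_of_mul_pos_right (by linarith) hδ.le

theorem stmt5_general
    (δ σ : ℝ) (hσ : σ = 0) (hδ : 0 < δ)
    (ν : Measure ℝ)
    (hνint : IntegrableOn (fun y => min 1 |y|) (Iio (0 : ℝ)) ν)
    (a b : ℝ) (hab : a < b) (g h : ℝ → ℝ)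
    (hgc : Continuous g) (hhc : Continuous h)
    (hagree : ∀ x ≤ a, h x = g x)
    (hgdiff : ∀ x ∈ Ioo a b, DifferentiableAt ℝ g x)
    (hhdiff : ∀ x ∈ Ioo a b, DifferentiableAt ℝ h x)
    (hfC1 : ContinuousOn (deriv (fun z => h z - g z)) (Ioo a b))
    (hf'bdd : ∃ M, ∀ x ∈ Ioo a ((a + b) / 2), |deriv (fun z => h z - g z) x| ≤ M)
    (hf'lim : ∃ L, Tendsto (deriv (fun z => h z - g z)) (𝓝[>] a) (𝓝 L))
    (hgint : ∀ x ∈ Ico a b, IntegrableOn (fun y => g (x + y) - g x) (Iio (0 : ℝ)) ν)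
    (hhint : ∀ x ∈ Ico a b, IntegrableOn (fun y => h (x + y) - h x) (Iio (0 : ℝ)) ν)
    (hharm : ∀ x ∈ Ioo a b, gen δ σ ν h x = 0)
    (hLgcont : ContinuousOn (fun x => gen δ σ ν g x) (Ico a b))
    (hLgneg : ∀ x ∈ Ico a b, gen δ σ ν g x < 0) :
    StrictMonoOn (fun z => h z - g z) (Ioo a b) ∧ ∀ x ∈ Ioo a b, g x < h x := by
  subst hσ
  set f : ℝ → ℝ := fun z => h z - g z
  obtain ⟨M, hM⟩ := hf'bdd
  obtain ⟨L, hL⟩ := hf'lim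
  have hfc : Continuous f := hhc.sub hgc
  have hf0 : ∀ x ≤ a, f x = 0 := fun x hx => sub_eq_zero.mpr (hagree x hx)
  have hLf : ∀ x ∈ Ioo a b, gen δ 0 ν f x = -gen δ 0 ν g x := fun x hx => by
    rw [gen_zero_sub (hgdiff x hx) (hhdiff x hx) (hgint x (Ioo_subset_Ico_self hx))
      (hhint x (Ioo_subset_Ico_self hx)), hharm x hx, zero_sub]
  have hfd : ∀ x ∈ Ioo a ((a + b) / 2), DifferentiableAt ℝ f x := fun x hx =>
    have hx' : x ∈ Ioo a b := Ioo_subset_Ioo_right (by linarith) hx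
    (hhdiff x hx').sub (hgdiff x hx')
  have hδL : δ * L = -gen δ 0 ν g a := by
    have hlimf := tendsto_gen_zero_nhdsGT (δ := δ) hνint hfc hf0 (by linarith) hfd hM hL
    have hlimg := (hLgcont a (left_mem_Ico.mpr hab)).mono_of_mem_nhdsWithin (Ico_mem_nhdsGT hab)
    refine tendsto_nhds_unique (hlimf.congr' ?_) hlimg.tendsto.neg
    filter_upwards [Ioo_mem_nhdsGT hab] with x hx using hLf x hx
  have hpos : ∀ x ∈ Ioo a b, 0 < deriv f x := by
    refine forall_pos_on_Ioo_of_propagation hfC1 (hL.eventually (eventually_gt_nhds ?_))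
      fun c hc hbefore =>
        deriv_pos_of_gen_zero_pos (ν := ν) hδ hfc.continuousOn hf0 hc.1.le hbefore ?_
    · exact pos_of_mul_pos_right (by linarith [hLgneg a (left_mem_Ico.mpr hab)]) hδ.le
    · linarith [hLf c hc, hLgneg c (Ioo_subset_Ico_self hc)]
  have hmono : StrictMonoOn f (Icc a b) :=
    strictMonoOn_of_deriv_pos (convex_Icc a b) hfc.continuousOn (by rwa [interior_Icc])
  refine ⟨hmono.mono Ioo_subset_Icc_self, fun x hx => sub_pos.mp ?_⟩
  have := hmono (left_mem_Icc.mpr hab.le) (Ioo_subset_Icc_self hx) hx.1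
  rwa [hf0 a le_rfl] at this

/-- Lemma 5.2 (bounded variation case `σ = 0`, `δ > 0`): if `h` agrees with `g`
on `(-∞,a]`, is harmonic on `(a,b)` while `ℒg < 0` on `[a,b)`, then `h - g` is
strictly increasing on `(a,b)`; in particular `h > g` on `(a,b)`. -/
theorem stmt5
    (δ σ : ℝ) (hσ : σ = 0) (hδ : 0 < δ)
    (ν : Measure ℝ) (hν0 : ν ≠ 0) (hνsupp : ν (Ici (0 : ℝ)) = 0)
    (hνint : IntegrableOn (fun y => min 1 |y|) (Iio (0 : ℝ)) ν)
    (a b : ℝ) (hab : a < b) (g h : ℝ → ℝ)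
    (hgc : Continuous g) (hhc : Continuous h)
    (hagree : ∀ x ≤ a, h x = g x)
    (hgdiff : ∀ x ∈ Ioo a b, DifferentiableAt ℝ g x)
    (hhdiff : ∀ x ∈ Ioo a b, DifferentiableAt ℝ h x)
    (hfC1 : ContinuousOn (deriv (fun z => h z - g z)) (Ioo a b))
    (hf'bdd : ∃ M, ∀ x ∈ Ioo a ((a + b) / 2), |deriv (fun z => h z - g z) x| ≤ M)
    (hf'lim : ∃ L, Tendsto (deriv (fun z => h z - g z)) (𝓝[>] a) (𝓝 L))
    (hgint : ∀ x ∈ Ico a b, IntegrableOn (fun y => g (x + y) - g x) (Iio (0 : ℝ)) ν)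
    (hhint : ∀ x ∈ Ico a b, IntegrableOn (fun y => h (x + y) - h x) (Iio (0 : ℝ)) ν)
    (hharm : ∀ x ∈ Ioo a b, gen δ σ ν h x = 0)
    (hLgcont : ContinuousOn (fun x => gen δ σ ν g x) (Ico a b))
    (hLgneg : ∀ x ∈ Ico a b, gen δ σ ν g x < 0) :
    StrictMonoOn (fun z => h z - g z) (Ioo a b) ∧ ∀ x ∈ Ioo a b, g x < h x :=
  stmt5_general δ σ hσ hδ ν hνint a b hab g h hgc hhc hagree hgdiff hhdiff hfC1 hf'bdd hf'lim hgint
    hhint hharm hLgcont hLgneg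
end

section
/- Lemma 5.4 of the paper (the right smooth Gerber–Shiu continuation lies strictly below g on a subharmonic interval). Let ℓ < r and let g, h : ℝ → ℝ be continuous with h(x) = g(x) for all x ≤ ℓ. Set s := g − h. Assume either (bounded variation case) σ = 0 and δ > 0, with s continuously differentiable on (ℓ,r), s′ bounded on (ℓ,(ℓ+r)/2), and lim_{x↓ℓ} s′(x) existing; or (unbounded variation case) σ > 0 with the right smooth-fit condition h′(ℓ+) = g′(ℓ+) (so that s is continuously differentiable on ℝ with s = 0 on (−∞,ℓ] and s′(ℓ) = 0), s twice continuously differentiable on (ℓ,r) with lim_{x↓ℓ} s″(x) existing and s′, s″ bounded near ℓ. Assume for every x ∈ [ℓ,r) that y ↦ g(x+y) − g(x) and y ↦ h(x+y) − h(x) are Π-integrable, that ℒh(x) = 0 for all x ∈ (ℓ,r), and that x ↦ ℒg(x) is continuous on [ℓ,r) with ℒg(x) > 0 for all x ∈ [ℓ,r). Then s = g − h is strictly increasing on (ℓ,r); in particular h(x) < g(x) for all x ∈ (ℓ,r). -/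
open MeasureTheory Set Filter Topology

noncomputable def jumpIntegral (ν : Measure ℝ) (f : ℝ → ℝ) (x : ℝ) : ℝ :=
  ∫ y in Iio (0 : ℝ), (f (x + y) - f x) ∂ν

lemma gen_eq_add_jumpIntegral (δ σ : ℝ) (ν : Measure ℝ) (f : ℝ → ℝ) (x : ℝ) :
    gen δ σ ν f x = δ * deriv f x + σ ^ 2 / 2 * deriv (deriv f) x + jumpIntegral ν f x :=
  rfl

lemma eqOn_gen_sub {δ σ : ℝ} {ν : Measure ℝ} {f₁ f₂ : ℝ → ℝ} {U : Set ℝ} (hU : IsOpen U)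
    (hd₁ : ∀ x ∈ U, DifferentiableAt ℝ f₁ x ∧ DifferentiableAt ℝ (deriv f₁) x)
    (hd₂ : ∀ x ∈ U, DifferentiableAt ℝ f₂ x ∧ DifferentiableAt ℝ (deriv f₂) x)
    (hi₁ : ∀ x ∈ U, IntegrableOn (fun y => f₁ (x + y) - f₁ x) (Iio 0) ν)
    (hi₂ : ∀ x ∈ U, IntegrableOn (fun y => f₂ (x + y) - f₂ x) (Iio 0) ν) :
    EqOn (gen δ σ ν (fun z => f₁ z - f₂ z)) (gen δ σ ν f₁ - gen δ σ ν f₂) U := by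
  intro x hx
  have hderiv : deriv (fun z => f₁ z - f₂ z) =ᶠ[𝓝 x] fun z => deriv f₁ z - deriv f₂ z := by
    filter_upwards [hU.mem_nhds hx] with z hz using deriv_sub (hd₁ z hz).1 (hd₂ z hz).1
  have hjump : jumpIntegral ν (fun z => f₁ z - f₂ z) x =
      jumpIntegral ν f₁ x - jumpIntegral ν f₂ x := by
    rw [jumpIntegral, jumpIntegral, jumpIntegral, ← integral_sub (hi₁ x hx) (hi₂ x hx)]
    congr 1 with y
    ring
  rw [Pi.sub_apply, gen_eq_add_jumpIntegral, gen_eq_add_jumpIntegral, gen_eq_add_jumpIntegral,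
    hjump, hderiv.deriv_eq, hderiv.eq_of_nhds, deriv_fun_sub (hd₁ x hx).2 (hd₂ x hx).2]
  ring

lemma jumpIntegral_nonpos {ν : Measure ℝ} {f : ℝ → ℝ} {x : ℝ} (hf : ∀ y < x, f y ≤ f x) :
    jumpIntegral ν f x ≤ 0 :=
  setIntegral_nonpos measurableSet_Iio fun y hy =>
    sub_nonpos.2 (hf _ (by linarith [mem_Iio.1 hy]))

lemma deriv_nonpos_of_le_left {f : ℝ → ℝ} {a m : ℝ} (ham : a < m)
    (hf : ∀ x ∈ Ioo a m, f m ≤ f x) : deriv f m ≤ 0 := by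
  by_cases hd : DifferentiableAt ℝ f m
  · have hslope := (hasDerivWithinAt_iff_tendsto_slope' self_notMem_Iio).1
      (hd.hasDerivAt.hasDerivWithinAt (s := Iio m))
    refine le_of_tendsto hslope ?_
    filter_upwards [Ioo_mem_nhdsLT ham] with x hx
    rw [slope_def_field]
    exact div_nonpos_of_nonneg_of_nonpos (sub_nonneg.2 (hf x hx)) (by linarith [hx.2])
  · exact (deriv_zero_of_not_differentiableAt hd).le

lemma lipschitzOnWith_Icc_of_abs_deriv_le {f : ℝ → ℝ} {a b M : ℝ} (hab : a ≠ b)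
    (hc : ContinuousOn f (Icc a b)) (hd : ∀ x ∈ Ioo a b, DifferentiableAt ℝ f x)
    (hM : ∀ x ∈ Ioo a b, |deriv f x| ≤ M) : LipschitzOnWith M.toNNReal f (Icc a b) := by
  rw [← closure_Ioo hab] at hc ⊢
  refine ((convex_Ioo a b).lipschitzOnWith_of_nnnorm_deriv_le hd (fun x hx => ?_)).closure hc
  rw [← NNReal.coe_le_coe, coe_nnnorm, Real.norm_eq_abs]
  exact (hM x hx).trans (Real.le_coe_toNNReal M)

lemma tendsto_jumpIntegral_nhdsGT {ν : Measure ℝ}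
    (hν : IntegrableOn (fun y => min 1 |y|) (Iio 0) ν) {s : ℝ → ℝ} {ℓ b M : ℝ}
    (hsc : Continuous s) (hs0 : ∀ x ≤ ℓ, s x = 0) (hb : ℓ < b)
    (hd : ∀ x ∈ Ioo ℓ b, DifferentiableAt ℝ s x) (hM : ∀ x ∈ Ioo ℓ b, |deriv s x| ≤ M) :
    Tendsto (jumpIntegral ν s) (𝓝[>] ℓ) (𝓝 0) := by
  set K := M.toNNReal
  have hlip : LipschitzOnWith K s (Icc ℓ b) :=
    lipschitzOnWith_Icc_of_abs_deriv_le hb.ne hsc.continuousOn hd hM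
  have hmeas : ∀ x, AEStronglyMeasurable (fun y => s (x + y) - s x) (ν.restrict (Iio 0)) :=
    fun x => (by fun_prop : Continuous fun y => s (x + y) - s x).aestronglyMeasurable
  -- Replace `x + y` by `max (x + y) ℓ`, which lies in `[ℓ, b]` and carries the same value of `s`.
  have hbound : ∀ x ∈ Ioo ℓ (min b (ℓ + 1)), ∀ y < 0, ‖s (x + y) - s x‖ ≤ K * min 1 |y| := by
    intro x hx y hy
    have hxb : x ≤ b := hx.2.le.trans (min_le_left _ _)
    have hmax : s (x + y) = s (max (x + y) ℓ) := by
      rcases le_total (x + y) ℓ with h | h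
      · rw [max_eq_right h, hs0 _ h, hs0 ℓ le_rfl]
      · rw [max_eq_left h]
    have hz : max (x + y) ℓ ∈ Icc ℓ b := ⟨le_max_right _ _, max_le (by linarith) hb.le⟩
    have hdist := hlip.dist_le_mul _ hz x ⟨hx.1.le, hxb⟩
    rw [Real.dist_eq, Real.dist_eq, abs_sub_comm _ x,
      abs_of_nonneg (sub_nonneg.2 (max_le (by linarith) hx.1.le))] at hdist
    rw [hmax, Real.norm_eq_abs]
    refine hdist.trans (mul_le_mul_of_nonneg_left (le_min ?_ ?_) K.coe_nonneg)
    · linarith [le_max_right (x + y) ℓ, hx.2.trans_le (min_le_right b (ℓ + 1))]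
    · linarith [le_max_left (x + y) ℓ, abs_of_neg hy]
  have hlim : ∀ y < 0, Tendsto (fun x => s (x + y) - s x) (𝓝[>] ℓ) (𝓝 0) := by
    intro y hy
    have hcont := (by fun_prop : Continuous fun x => s (x + y) - s x).tendsto ℓ
    rw [hs0 (ℓ + y) (by linarith), hs0 ℓ le_rfl, sub_zero] at hcont
    exact hcont.mono_left nhdsWithin_le_nhds
  have key := tendsto_integral_filter_of_dominated_convergence (μ := ν.restrict (Iio 0))
    (F := fun x y => s (x + y) - s x) (f := fun _ => 0) (fun y => K * min 1 |y|)
    (Eventually.of_forall hmeas) ?_ (hν.const_mul K)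
    ((ae_restrict_iff' measurableSet_Iio).2 (ae_of_all _ hlim))
  · rw [integral_zero] at key
    exact key
  · filter_upwards [Ioo_mem_nhdsGT (lt_min hb (lt_add_one ℓ))] with x hx
    exact (ae_restrict_iff' measurableSet_Iio).2 (ae_of_all _ (hbound x hx))

lemma forall_pos_of_no_first_zero {f : ℝ → ℝ} {a b : ℝ} (hf : ContinuousOn f (Ioo a b))
    (hnear : ∀ᶠ x in 𝓝[>] a, 0 < f x)
    (hzero : ∀ m ∈ Ioo a b, f m = 0 → ¬∀ x ∈ Ioo a m, 0 < f x) :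
    ∀ x ∈ Ioo a b, 0 < f x := by
  intro x₀ hx₀
  by_contra! hx₀le
  obtain ⟨c, hac, hc⟩ := mem_nhdsGT_iff_exists_Ioc_subset.1 hnear
  have hcx₀ : c < x₀ := lt_of_not_ge fun h => (hc ⟨hx₀.1, h⟩ : 0 < f x₀).not_ge hx₀le
  have hcpos : 0 < f c := hc ⟨hac, le_rfl⟩
  have hIcc : Icc c x₀ ⊆ Ioo a b := Icc_subset_Ioo hac hx₀.2
  set K := Icc c x₀ ∩ f ⁻¹' Iic 0
  have hKclosed : IsClosed K :=
    (hf.mono hIcc).preimage_isClosed_of_isClosed isClosed_Icc isClosed_Iic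
  have hKbdd : BddBelow K := ⟨c, fun t ht => ht.1.1⟩
  have hmK : sInf K ∈ K := hKclosed.csInf_mem ⟨x₀, ⟨hcx₀.le, le_rfl⟩, hx₀le⟩ hKbdd
  set m := sInf K
  have hm : m ∈ Ioo a b := hIcc hmK.1
  have hleft : ∀ x ∈ Ioo a m, 0 < f x := by
    intro x hx
    rcases le_or_gt x c with hxc | hxc
    · exact hc ⟨hx.1, hxc⟩
    · by_contra! hfx
      exact (csInf_le hKbdd ⟨⟨hxc.le, hx.2.le.trans hmK.1.2⟩, hfx⟩).not_gt hx.2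
  have hfm : f m = 0 := by
    have hle : 𝓝[<] m ≤ 𝓝[Ioo a b] m := by
      rw [← nhdsWithin_Ioo_eq_nhdsLT hm.1]
      exact nhdsWithin_mono _ (Ioo_subset_Ioo_right hm.2.le)
    refine le_antisymm hmK.2 (ge_of_tendsto ((hf m hm).tendsto.mono_left hle) ?_)
    filter_upwards [Ioo_mem_nhdsLT hm.1] with x hx using (hleft x hx).le
  exact hzero m hm hfm hleft

section Generator

variable {δ σ : ℝ} {ν : Measure ℝ} {s : ℝ → ℝ} {ℓ : ℝ}

lemma eventually_deriv_pos_of_sigma_eq_zero {c : ℝ} (hδ : 0 < δ) (hc : 0 < c)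
    (hgen : Tendsto (gen δ 0 ν s) (𝓝[>] ℓ) (𝓝 c))
    (hjump : Tendsto (jumpIntegral ν s) (𝓝[>] ℓ) (𝓝 0)) :
    ∀ᶠ x in 𝓝[>] ℓ, 0 < deriv s x := by
  have hderiv : deriv s = fun x => (gen δ 0 ν s x - jumpIntegral ν s x) / δ := by
    ext x
    rw [gen_eq_add_jumpIntegral]
    field_simp
    ring
  have hlim : Tendsto (deriv s) (𝓝[>] ℓ) (𝓝 ((c - 0) / δ)) :=
    hderiv ▸ (hgen.sub hjump).div_const δ
  exact hlim.eventually (eventually_gt_nhds (by rw [sub_zero]; positivity))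

lemma eventually_deriv_pos_of_sigma_pos {c : ℝ} (hσ : 0 < σ) (hc : 0 < c)
    (hs' : ContinuousOn (deriv s) (Ici ℓ)) (hs'ℓ : deriv s ℓ = 0)
    (hgen : Tendsto (gen δ σ ν s) (𝓝[>] ℓ) (𝓝 c))
    (hjump : Tendsto (jumpIntegral ν s) (𝓝[>] ℓ) (𝓝 0)) :
    ∀ᶠ x in 𝓝[>] ℓ, 0 < deriv s x := by
  have hs'lim : Tendsto (deriv s) (𝓝[>] ℓ) (𝓝 0) := by
    rw [← hs'ℓ]
    exact (hs' ℓ self_mem_Ici).tendsto.mono_left (nhdsWithin_mono _ Ioi_subset_Ici_self)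
  have hderiv2 : deriv (deriv s) =
      fun x => (gen δ σ ν s x - jumpIntegral ν s x - δ * deriv s x) * (2 / σ ^ 2) := by
    ext x
    rw [gen_eq_add_jumpIntegral]
    field_simp
    ring
  have hlim : Tendsto (deriv (deriv s)) (𝓝[>] ℓ) (𝓝 ((c - 0 - δ * 0) * (2 / σ ^ 2))) :=
    hderiv2 ▸ ((hgen.sub hjump).sub (hs'lim.const_mul δ)).mul_const _
  obtain ⟨a, hℓa, ha⟩ := mem_nhdsGT_iff_exists_Ioo_subset.1
    (hlim.eventually (eventually_gt_nhds (by simp only [sub_zero, mul_zero]; positivity)))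
  filter_upwards [Ioo_mem_nhdsGT hℓa] with x hx
  have hmono : StrictMonoOn (deriv s) (Icc ℓ x) :=
    strictMonoOn_of_deriv_pos (convex_Icc ℓ x) (hs'.mono Icc_subset_Ici_self) fun y hy => by
      rw [interior_Icc] at hy
      exact ha ⟨hy.1, hy.2.trans hx.2⟩
  simpa [hs'ℓ] using hmono (left_mem_Icc.2 hx.1.le) (right_mem_Icc.2 hx.1.le) hx.1

lemma forall_deriv_pos_of_gen_pos {r : ℝ} (hsc : Continuous s) (hs0 : ∀ x ≤ ℓ, s x = 0)
    (hs' : ContinuousOn (deriv s) (Ioo ℓ r)) (hnear : ∀ᶠ x in 𝓝[>] ℓ, 0 < deriv s x)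
    (hgen : ∀ x ∈ Ioo ℓ r, 0 < gen δ σ ν s x) :
    ∀ x ∈ Ioo ℓ r, 0 < deriv s x := by
  refine forall_pos_of_no_first_zero hs' hnear fun m hm hs'm hleft => ?_
  have hmono : StrictMonoOn s (Icc ℓ m) :=
    strictMonoOn_of_deriv_pos (convex_Icc ℓ m) hsc.continuousOn (by rwa [interior_Icc])
  have hmax : ∀ z < m, s z ≤ s m := by
    intro z hz
    rcases le_or_gt z ℓ with hzℓ | hzℓ
    · rw [hs0 z hzℓ, ← hs0 ℓ le_rfl]
      exact hmono.monotoneOn (left_mem_Icc.2 hm.1.le) (right_mem_Icc.2 hm.1.le) hm.1.le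
    · exact hmono.monotoneOn ⟨hzℓ.le, hz.le⟩ (right_mem_Icc.2 hm.1.le) hz.le
  have hs''m : deriv (deriv s) m ≤ 0 :=
    deriv_nonpos_of_le_left hm.1 fun x hx => hs'm ▸ (hleft x hx).le
  have hgenm := hgen m hm
  rw [gen_eq_add_jumpIntegral, hs'm] at hgenm
  nlinarith [jumpIntegral_nonpos (ν := ν) hmax, sq_nonneg σ]

end Generator

theorem stmt8_general
    (δ σ : ℝ)
    (ν : Measure ℝ)
    (hνint : IntegrableOn (fun y => min 1 |y|) (Iio (0 : ℝ)) ν)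
    (ℓ r : ℝ) (hlr : ℓ < r) (g h : ℝ → ℝ)
    (hgc : Continuous g) (hhc : Continuous h)
    (hagree : ∀ x ≤ ℓ, h x = g x)
    (hgdiff : ∀ x ∈ Ioo ℓ r, DifferentiableAt ℝ g x ∧ DifferentiableAt ℝ (deriv g) x)
    (hhdiff : ∀ x ∈ Ioo ℓ r, DifferentiableAt ℝ h x ∧ DifferentiableAt ℝ (deriv h) x)
    (hgint : ∀ x ∈ Ico ℓ r, IntegrableOn (fun y => g (x + y) - g x) (Iio (0 : ℝ)) ν)
    (hhint : ∀ x ∈ Ico ℓ r, IntegrableOn (fun y => h (x + y) - h x) (Iio (0 : ℝ)) ν)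
    (hharm : ∀ x ∈ Ioo ℓ r, gen δ σ ν h x = 0)
    (hLgcont : ContinuousOn (fun x => gen δ σ ν g x) (Ico ℓ r))
    (hLgpos : ∀ x ∈ Ico ℓ r, 0 < gen δ σ ν g x)
    (hcase :
      (σ = 0 ∧ 0 < δ ∧
        ContinuousOn (deriv (fun z => g z - h z)) (Ioo ℓ r) ∧
        (∃ M, ∀ x ∈ Ioo ℓ ((ℓ + r) / 2), |deriv (fun z => g z - h z) x| ≤ M) ∧
        (∃ L, Tendsto (deriv (fun z => g z - h z)) (𝓝[>] ℓ) (𝓝 L)))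
      ∨
      (0 < σ ∧ (∀ x, DifferentiableAt ℝ (fun z => g z - h z) x) ∧
        Continuous (deriv (fun z => g z - h z)) ∧
        deriv (fun z => g z - h z) ℓ = 0 ∧
        (∀ x ∈ Ioo ℓ r, DifferentiableAt ℝ (deriv (fun z => g z - h z)) x) ∧
        ContinuousOn (deriv (deriv (fun z => g z - h z))) (Ioo ℓ r) ∧
        (∃ L, Tendsto (deriv (deriv (fun z => g z - h z))) (𝓝[>] ℓ) (𝓝 L)) ∧
        (∃ ε > (0 : ℝ), ∃ M, ∀ x ∈ Ioo ℓ (ℓ + ε),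
          |deriv (fun z => g z - h z) x| ≤ M ∧
          |deriv (deriv (fun z => g z - h z)) x| ≤ M))) :
    StrictMonoOn (fun z => g z - h z) (Ioo ℓ r) ∧ ∀ x ∈ Ioo ℓ r, h x < g x := by
  set s := fun z => g z - h z
  have hsc : Continuous s := hgc.sub hhc
  have hs0 : ∀ x ≤ ℓ, s x = 0 := fun x hx => sub_eq_zero.2 (hagree x hx).symm
  have hgen : EqOn (gen δ σ ν g) (gen δ σ ν s) (Ioo ℓ r) := fun x hx => by
    rw [eqOn_gen_sub isOpen_Ioo hgdiff hhdiff (fun y hy => hgint y (Ioo_subset_Ico_self hy))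
      (fun y hy => hhint y (Ioo_subset_Ico_self hy)) hx, Pi.sub_apply, hharm x hx, sub_zero]
  have hgenℓ : 0 < gen δ σ ν g ℓ := hLgpos ℓ (left_mem_Ico.2 hlr)
  have hlim : Tendsto (gen δ σ ν s) (𝓝[>] ℓ) (𝓝 (gen δ σ ν g ℓ)) :=
    (((continuousWithinAt_Ico_iff_Ici hlr).1 (hLgcont ℓ (left_mem_Ico.2 hlr))).mono
      Ioi_subset_Ici_self).tendsto.congr' (hgen.eventuallyEq_of_mem (Ioo_mem_nhdsGT hlr))
  have hnear : ∀ᶠ x in 𝓝[>] ℓ, 0 < deriv s x := by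
    rcases hcase with ⟨rfl, hδ, -, ⟨M, hM⟩, -⟩ | ⟨hσ, hsd, hs'c, hs'ℓ, -, -, -, ε, hε, M, hM⟩
    · refine eventually_deriv_pos_of_sigma_eq_zero hδ hgenℓ hlim
        (tendsto_jumpIntegral_nhdsGT hνint hsc hs0 (by linarith) (fun x hx => ?_) hM)
      have hx' : x ∈ Ioo ℓ r := ⟨hx.1, by linarith [hx.2]⟩
      exact (hgdiff x hx').1.sub (hhdiff x hx').1
    · exact eventually_deriv_pos_of_sigma_pos hσ hgenℓ hs'c.continuousOn hs'ℓ hlim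
        (tendsto_jumpIntegral_nhdsGT hνint hsc hs0 (by linarith) (fun x _ => hsd x)
          fun x hx => (hM x hx).1)
  have hs'c : ContinuousOn (deriv s) (Ioo ℓ r) := hcase.elim (·.2.2.1) (·.2.2.1.continuousOn)
  have hpos := forall_deriv_pos_of_gen_pos hsc hs0 hs'c hnear fun x hx =>
    hgen hx ▸ hLgpos x (Ioo_subset_Ico_self hx)
  have hmono : StrictMonoOn s (Ico ℓ r) :=
    strictMonoOn_of_deriv_pos (convex_Ico ℓ r) hsc.continuousOn (by rwa [interior_Ico])
  refine ⟨hmono.mono Ioo_subset_Ico_self, fun x hx => sub_pos.1 ?_⟩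
  have hsx := hmono (left_mem_Ico.2 hlr) (Ioo_subset_Ico_self hx) hx.1
  rwa [hs0 ℓ le_rfl] at hsx

/-- Lemma 5.4 (the right smooth Gerber–Shiu continuation lies strictly below
`g` on a strictly subharmonic interval): if `h` agrees with `g` on `(-∞,ℓ]`,
is harmonic on `(ℓ,r)` while `ℒg > 0` on `[ℓ,r)`, then `s := g - h` is strictly
increasing on `(ℓ,r)`; in particular `h < g` on `(ℓ,r)`. -/
theorem stmt8
    (δ σ : ℝ) (hσ : 0 ≤ σ)
    (ν : Measure ℝ) (hν0 : ν ≠ 0) (hνsupp : ν (Ici (0 : ℝ)) = 0)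
    (hνint : IntegrableOn (fun y => min 1 |y|) (Iio (0 : ℝ)) ν)
    (ℓ r : ℝ) (hlr : ℓ < r) (g h : ℝ → ℝ)
    (hgc : Continuous g) (hhc : Continuous h)
    (hagree : ∀ x ≤ ℓ, h x = g x)
    (hgdiff : ∀ x ∈ Ioo ℓ r, DifferentiableAt ℝ g x ∧ DifferentiableAt ℝ (deriv g) x)
    (hhdiff : ∀ x ∈ Ioo ℓ r, DifferentiableAt ℝ h x ∧ DifferentiableAt ℝ (deriv h) x)
    (hgint : ∀ x ∈ Ico ℓ r, IntegrableOn (fun y => g (x + y) - g x) (Iio (0 : ℝ)) ν)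
    (hhint : ∀ x ∈ Ico ℓ r, IntegrableOn (fun y => h (x + y) - h x) (Iio (0 : ℝ)) ν)
    (hharm : ∀ x ∈ Ioo ℓ r, gen δ σ ν h x = 0)
    (hLgcont : ContinuousOn (fun x => gen δ σ ν g x) (Ico ℓ r))
    (hLgpos : ∀ x ∈ Ico ℓ r, 0 < gen δ σ ν g x)
    (hcase :
      (σ = 0 ∧ 0 < δ ∧
        ContinuousOn (deriv (fun z => g z - h z)) (Ioo ℓ r) ∧
        (∃ M, ∀ x ∈ Ioo ℓ ((ℓ + r) / 2), |deriv (fun z => g z - h z) x| ≤ M) ∧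
        (∃ L, Tendsto (deriv (fun z => g z - h z)) (𝓝[>] ℓ) (𝓝 L)))
      ∨
      (0 < σ ∧ (∀ x, DifferentiableAt ℝ (fun z => g z - h z) x) ∧
        Continuous (deriv (fun z => g z - h z)) ∧
        deriv (fun z => g z - h z) ℓ = 0 ∧
        (∀ x ∈ Ioo ℓ r, DifferentiableAt ℝ (deriv (fun z => g z - h z)) x) ∧
        ContinuousOn (deriv (deriv (fun z => g z - h z))) (Ioo ℓ r) ∧
        (∃ L, Tendsto (deriv (deriv (fun z => g z - h z))) (𝓝[>] ℓ) (𝓝 L)) ∧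
        (∃ ε > (0 : ℝ), ∃ M, ∀ x ∈ Ioo ℓ (ℓ + ε),
          |deriv (fun z => g z - h z) x| ≤ M ∧
          |deriv (deriv (fun z => g z - h z)) x| ≤ M))) :
    StrictMonoOn (fun z => g z - h z) (Ioo ℓ r) ∧ ∀ x ∈ Ioo ℓ r, h x < g x :=
  stmt8_general δ σ ν hνint ℓ r hlr g h hgc hhc hagree hgdiff hhdiff hgint hhint hharm hLgcont
    hLgpos hcase
end

section
/- Superharmonicity of the reward at the fit point of a harmonic majorant (Lemma 5.9 of the paper, bounded variation case, stated analytically). Assume σ = 0 and δ > 0, and assume ∫_{(−∞,0)} |y| Π(dy) < ∞. Let a ∈ ℝ and let g, u : ℝ → ℝ be Lipschitz continuous on ℝ and satisfy: u(x) = g(x) for all x ≤ a; u(x) ≥ g(x) for all x ∈ ℝ; g is differentiable at a; u is differentiable on (a,∞) and u′(a+) := lim_{x↓a} u′(x) exists; and ℒu(x) = δ u′(x) + ∫_{(−∞,0)}(u(x+y) − u(x)) Π(dy) = 0 for all x ∈ (a,∞). Then ℒg(a) = δ g′(a) + ∫_{(−∞,0)}(g(a+y) − g(a)) Π(dy) ≤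 0. -/
/-!
At the fit point `a` the jump parts of `ℒu(a)` and `ℒg(a)` coincide, since `u = g` on
`(-∞, a]` and only jumps `y < 0` enter. Letting `x ↓ a` in `ℒu(x) = 0`
(dominated convergence, with bound `K |y|` from the Lipschitz constant) gives
`δ u'(a+) + ∫ (g(a+y) - g(a)) ν(dy) = 0`. Since `u ≥ g` with equality at `a`, the right
derivative `u'(a+)` dominates `g'(a)`, so `ℒg(a) = δ (g'(a) - u'(a+)) ≤ 0`.
-/

open MeasureTheory Set Filter Topology

/-- Generator of a spectrally negative Lévy process of bounded variation
(`σ = 0`) with drift `δ` and Lévy measure `ν` concentrated on `(-∞,0)`: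
`ℒf(x) = δ f'(x) + ∫_{(-∞,0)} (f(x+y) - f(x)) ν(dy)`. -/
noncomputable def genBV (δ : ℝ) (ν : Measure ℝ) (f : ℝ → ℝ) (x : ℝ) : ℝ :=
  δ * deriv f x + ∫ y in Iio (0 : ℝ), (f (x + y) - f x) ∂ν

theorem HasDerivWithinAt.le_of_eventuallyLE_Ioi {f g : ℝ → ℝ} {a f' g' : ℝ}
    (hf : HasDerivWithinAt f f' (Ioi a) a) (hg : HasDerivWithinAt g g' (Ioi a) a)
    (hle : ∀ᶠ x in 𝓝[>] a, f x ≤ g x) (heq : f a = g a) : f' ≤ g' := by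
  refine le_of_tendsto_of_tendsto ((hasDerivWithinAt_iff_tendsto_slope' self_notMem_Ioi).1 hf)
    ((hasDerivWithinAt_iff_tendsto_slope' self_notMem_Ioi).1 hg) ?_
  filter_upwards [hle, self_mem_nhdsWithin] with x hx hax
  simp only [slope_def_field, heq]
  exact div_le_div_of_nonneg_right (by linarith) (sub_nonneg.2 (le_of_lt hax))

theorem LipschitzWith.continuous_setIntegral_increment {K : NNReal} {u : ℝ → ℝ}
    (hu : LipschitzWith K u) {ν : Measure ℝ} {s : Set ℝ}
    (hν : IntegrableOn (fun y => |y|) s ν) :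
    Continuous fun x => ∫ y in s, (u (x + y) - u x) ∂ν := by
  refine continuous_of_dominated (bound := fun y => K * |y|) (fun x => ?_) (fun x => ?_)
    (hν.const_mul _) (ae_of_all _ fun y => ?_)
  · exact ((hu.continuous.comp (continuous_const_add x)).sub
      continuous_const).aestronglyMeasurable
  · refine ae_of_all _ fun y => ?_
    simpa [Real.dist_eq] using hu.dist_le_mul (x + y) x
  · exact (hu.continuous.comp (continuous_id.add continuous_const)).sub hu.continuous

theorem tendsto_genBV_nhdsGT {δ L a : ℝ} {ν : Measure ℝ} {K : NNReal} {u : ℝ → ℝ}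
    (hν : IntegrableOn (fun y => |y|) (Iio 0) ν) (hu : LipschitzWith K u)
    (hu' : Tendsto (deriv u) (𝓝[>] a) (𝓝 L)) :
    Tendsto (genBV δ ν u) (𝓝[>] a)
      (𝓝 (δ * L + ∫ y in Iio (0 : ℝ), (u (a + y) - u a) ∂ν)) :=
  (tendsto_const_nhds.mul hu').add
    ((hu.continuous_setIntegral_increment hν).continuousAt.mono_left nhdsWithin_le_nhds)

theorem stmt9_general
    (δ : ℝ) (hδ : 0 < δ)
    (ν : Measure ℝ)
    (hνint : IntegrableOn (fun y => |y|) (Iio (0 : ℝ)) ν)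
    (a : ℝ) (g u : ℝ → ℝ)
    (huLip : ∃ K, LipschitzWith K u)
    (hagree : ∀ x ≤ a, u x = g x)
    (hmaj : ∀ x, g x ≤ u x)
    (hgdiff : DifferentiableAt ℝ g a)
    (hudiff : ∀ x ∈ Ioi a, DifferentiableAt ℝ u x)
    (hu'lim : ∃ L, Tendsto (deriv u) (𝓝[>] a) (𝓝 L))
    (hharm : ∀ x ∈ Ioi a, genBV δ ν u x = 0) :
    genBV δ ν g a ≤ 0 := by
  obtain ⟨L, hL⟩ := hu'lim
  obtain ⟨K, hK⟩ := huLip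
  have hjump : ∫ y in Iio (0 : ℝ), (u (a + y) - u a) ∂ν
      = ∫ y in Iio (0 : ℝ), (g (a + y) - g a) ∂ν :=
    setIntegral_congr_fun measurableSet_Iio fun y (hy : y < 0) => by
      rw [hagree _ (by linarith), hagree a le_rfl]
  have hlimit : δ * L + ∫ y in Iio (0 : ℝ), (g (a + y) - g a) ∂ν = 0 :=
    hjump ▸ tendsto_nhds_unique (tendsto_genBV_nhdsGT hνint hK hL)
      (tendsto_const_nhds.congr' (eventually_nhdsWithin_of_forall fun x hx => (hharm x hx).symm))
  have hu_right : HasDerivWithinAt u L (Ioi a) a :=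
    (hasDerivWithinAt_Ici_of_tendsto_deriv (fun x hx => (hudiff x hx).differentiableWithinAt)
      hK.continuous.continuousWithinAt self_mem_nhdsWithin hL).Ioi_of_Ici
  have hderiv : deriv g a ≤ L :=
    hgdiff.hasDerivAt.hasDerivWithinAt.le_of_eventuallyLE_Ioi hu_right
      (Eventually.of_forall hmaj) (hagree a le_rfl).symm
  have : genBV δ ν g a = δ * (deriv g a - L) := by
    simp only [genBV]
    linarith
  rw [this]
  exact mul_nonpos_of_nonneg_of_nonpos hδ.le (by linarith)

/-- Superharmonicity of the reward at the fit point of a harmonic majorant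
(Lemma 5.9, bounded variation case): if `u` agrees with `g` on `(-∞,a]`,
majorizes `g`, and is harmonic on `(a,∞)`, then `ℒg(a) ≤ 0`. -/
theorem stmt9
    (δ : ℝ) (hδ : 0 < δ)
    (ν : Measure ℝ) (hν0 : ν ≠ 0) (hνsupp : ν (Ici (0 : ℝ)) = 0)
    (hνint : IntegrableOn (fun y => |y|) (Iio (0 : ℝ)) ν)
    (a : ℝ) (g u : ℝ → ℝ)
    (hgLip : ∃ K, LipschitzWith K g) (huLip : ∃ K, LipschitzWith K u)
    (hagree : ∀ x ≤ a, u x = g x)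
    (hmaj : ∀ x, g x ≤ u x)
    (hgdiff : DifferentiableAt ℝ g a)
    (hudiff : ∀ x ∈ Ioi a, DifferentiableAt ℝ u x)
    (hu'lim : ∃ L, Tendsto (deriv u) (𝓝[>] a) (𝓝 L))
    (hharm : ∀ x ∈ Ioi a, genBV δ ν u x = 0) :
    genBV δ ν g a ≤ 0 :=
  stmt9_general δ hδ ν hνint a g u huLip hagree hmaj hgdiff hudiff hu'lim hharm
end

section
/- Superharmonicity of the reward at a tangency point of a harmonic majorant from above (claim proved in the Appendix: ℒg(b′) ≤ 0 at the right boundary). Let q ≥ 0 and b ∈ ℝ. Let u, g : ℝ → ℝ be Borel measurable, each differentiable on a neighborhood of b with derivative differentiable at b, and such that y ↦ u(b+y) − u(b) and y ↦ g(b+y) − g(b) are Π-integrable on (−∞,0). Assume u(x) ≥ g(x) for all x ∈ ℝ, u(b) = g(b), u′(b) = g′(b), and ℒu(b) − q·u(b) = 0. Then ℒg(b) − q·g(b) ≤ 0. -/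
/-!
Since `u - g ≥ 0` vanishes at `b`, `b` is a minimum of `u - g`, so `g''(b) ≤ u''(b)`; the jump
integrand of `g` at `b` is dominated by that of `u`, and the first derivatives and values agree.
Hence `(ℒ - q)g(b) ≤ (ℒ - q)u(b) = 0`.
-/

open MeasureTheory Set Filter Topology

/-- A negative second derivative would make `a` a local maximum as well, so `f` would be locally
constant at `a`. -/
theorem IsLocalMin.deriv_deriv_nonneg {f : ℝ → ℝ} {a : ℝ} (hmin : IsLocalMin f a)
    (hc : ContinuousAt f a) : 0 ≤ deriv (deriv f) a := by
  by_contra! hneg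
  have hmax := isLocalMax_of_deriv_deriv_neg hneg hmin.deriv_eq_zero hc
  have hconst : f =ᶠ[𝓝 a] fun _ => f a :=
    (hmin.and hmax).mono fun _ hx => le_antisymm hx.2 hx.1
  have hzero : deriv (deriv f) a = 0 := by
    rw [hconst.deriv.deriv_eq]
    simp
  exact hneg.ne hzero

theorem deriv_deriv_le_of_le_of_eq {f h : ℝ → ℝ} {a : ℝ} (hle : ∀ x, f x ≤ h x) (heq : f a = h a)
    (hf : ∀ᶠ x in 𝓝 a, DifferentiableAt ℝ f x) (hf' : DifferentiableAt ℝ (deriv f) a)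
    (hh : ∀ᶠ x in 𝓝 a, DifferentiableAt ℝ h x) (hh' : DifferentiableAt ℝ (deriv h) a) :
    deriv (deriv f) a ≤ deriv (deriv h) a := by
  have hmin : IsLocalMin (h - f) a :=
    Eventually.of_forall fun x => by simpa [heq] using hle x
  have hderiv : deriv (h - f) =ᶠ[𝓝 a] deriv h - deriv f :=
    (hf.and hh).mono fun _ hx => deriv_sub hx.2 hx.1
  have hnonneg := hmin.deriv_deriv_nonneg (hh.self_of_nhds.sub hf.self_of_nhds).continuousAt
  rw [hderiv.deriv_eq, deriv_sub hh' hf'] at hnonneg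
  linarith

theorem gen_le_gen_of_le_of_tangent {δ σ : ℝ} {ν : Measure ℝ} {f h : ℝ → ℝ} {a : ℝ}
    (hle : ∀ x, f x ≤ h x) (heq : f a = h a) (heq' : deriv f a = deriv h a)
    (hle'' : deriv (deriv f) a ≤ deriv (deriv h) a)
    (hfint : IntegrableOn (fun y => f (a + y) - f a) (Iio 0) ν)
    (hhint : IntegrableOn (fun y => h (a + y) - h a) (Iio 0) ν) :
    gen δ σ ν f a ≤ gen δ σ ν h a := by
  have hint : ∫ y in Iio 0, (f (a + y) - f a) ∂ν ≤ ∫ y in Iio 0, (h (a + y) - h a) ∂ν :=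
    setIntegral_mono_on hfint hhint measurableSet_Iio fun y _ => by
      simpa [heq] using hle (a + y)
  unfold gen
  rw [heq']
  gcongr

theorem stmt10_general
    (δ σ : ℝ)
    (ν : Measure ℝ)
    (q : ℝ) (b : ℝ) (u g : ℝ → ℝ)
    (hud : ∀ᶠ x in 𝓝 b, DifferentiableAt ℝ u x) (hud' : DifferentiableAt ℝ (deriv u) b)
    (hgd : ∀ᶠ x in 𝓝 b, DifferentiableAt ℝ g x) (hgd' : DifferentiableAt ℝ (deriv g) b)
    (huint : IntegrableOn (fun y => u (b + y) - u b) (Iio (0 : ℝ)) ν)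
    (hgint : IntegrableOn (fun y => g (b + y) - g b) (Iio (0 : ℝ)) ν)
    (hmaj : ∀ x, g x ≤ u x)
    (heq : u b = g b) (heq' : deriv u b = deriv g b)
    (hLu : gen δ σ ν u b - q * u b = 0) :
    gen δ σ ν g b - q * g b ≤ 0 := by
  have hgen : gen δ σ ν g b ≤ gen δ σ ν u b :=
    gen_le_gen_of_le_of_tangent hmaj heq.symm heq'.symm
      (deriv_deriv_le_of_le_of_eq hmaj heq.symm hgd hgd' hud hud') hgint huint
  rw [← heq]
  linarith

/-- Superharmonicity of the reward at a tangency point of a harmonic majorant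
from above: if `u ≥ g` everywhere, `u(b) = g(b)`, `u'(b) = g'(b)` and
`(ℒ - q)u(b) = 0`, then `(ℒ - q)g(b) ≤ 0`. -/
theorem stmt10
    (δ σ : ℝ) (hσ : 0 ≤ σ)
    (ν : Measure ℝ) (hν0 : ν ≠ 0) (hνsupp : ν (Ici (0 : ℝ)) = 0)
    (hνint : IntegrableOn (fun y => min 1 |y|) (Iio (0 : ℝ)) ν)
    (q : ℝ) (hq : 0 ≤ q) (b : ℝ) (u g : ℝ → ℝ)
    (hum : Measurable u) (hgm : Measurable g)
    (hud : ∀ᶠ x in 𝓝 b, DifferentiableAt ℝ u x) (hud' : DifferentiableAt ℝ (deriv u) b)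
    (hgd : ∀ᶠ x in 𝓝 b, DifferentiableAt ℝ g x) (hgd' : DifferentiableAt ℝ (deriv g) b)
    (huint : IntegrableOn (fun y => u (b + y) - u b) (Iio (0 : ℝ)) ν)
    (hgint : IntegrableOn (fun y => g (b + y) - g b) (Iio (0 : ℝ)) ν)
    (hmaj : ∀ x, g x ≤ u x)
    (heq : u b = g b) (heq' : deriv u b = deriv g b)
    (hLu : gen δ σ ν u b - q * u b = 0) :
    gen δ σ ν g b - q * g b ≤ 0 :=
  stmt10_general δ σ ν q b u g hud hud' hgd hgd' huint hgint hmaj heq heq' hLu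
end
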